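/- arXiv:1704.01172 — 2 statements merged into one kernel-verified Lean document; each statement's English description precedes it below -/
import Mathlib

section
/- Let G be a finite simple graph having two adjacent edges vu₁ and vu₂ (with u₁ ≠ u₂) such that G' := G − {vu₁, vu₂} admits a neighbour-sum-distinguishing edge-weighting w (with strictly positive integer weights). Assume deg_G(u₁) ≥ deg_G(u₂), and set μ := (deg_G(u₁) + 1) + max{0, deg_G(v) + deg_G(u₂) − deg_G(u₁) − 1}. If W is a set of at least μ distinct strictly positive integers, then there exist two distinct weights α, β ∈ W such that the extension of w assigning α to vu₁ and β to vu₂ is a neighbour-sum-distinguishing edge-weighting of G. -/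
open scoped Classical
open Finset

/-- The degree of a vertex `v` in a finite simple graph `G`. -/
noncomputable def degG {V : Type*} [Fintype V] (G : SimpleGraph V) (v : V) : ℕ :=
  (Finset.univ.filter (fun x => G.Adj v x)).card

/-- The sum `σ_w(v)` of the weights of the edges of `G` incident to `v`. -/
noncomputable def vSum {V : Type*} [Fintype V] (G : SimpleGraph V) (w : Sym2 V → ℕ) (v : V) : ℕ :=
  ∑ x ∈ Finset.univ.filter (fun x => G.Adj v x), w s(v, x)

/-- An edge-weighting is edge-injective if distinct edges receive distinct weights. -/
def EdgeInjective {V : Type*} (G : SimpleGraph V) (w : Sym2 V → ℕ) : Prop :=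
  ∀ e ∈ G.edgeSet, ∀ f ∈ G.edgeSet, w e = w f → e = f

/-- An edge-weighting is neighbour-sum-distinguishing if `σ_w(u) ≠ σ_w(v)` for every edge `uv`. -/
def NSD {V : Type*} [Fintype V] (G : SimpleGraph V) (w : Sym2 V → ℕ) : Prop :=
  ∀ u v, G.Adj u v → vSum G w u ≠ vSum G w v

/-- A graph is nice if no edge has both of its endpoints of degree 1
(equivalently, no connected component is isomorphic to `K₂`). -/
def Nice {V : Type*} [Fintype V] (G : SimpleGraph V) : Prop :=
  ∀ u v, G.Adj u v → ¬ (degG G u = 1 ∧ degG G v = 1)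


/-! Let `σ` be the vertex sums of `w` in `G - {vu₁, vu₂}`; weighting `vu₁` by `α` and `vu₂` by `β`
raises the sums at `v`, `u₁`, `u₂` by `α + β`, `α`, `β` and leaves the others alone. Choose `α`
first, avoiding `σ u₂ - σ v` (then `v` and `u₂` stay apart whatever `β` is) and the `deg u₁ - 1`
values that make `u₁` collide with a neighbour other than `v`. Then, with `τ` the sums once `α`
is placed, choose `β ≠ α` avoiding the at most `deg v + deg u₂ - 2` values that make `v` or `u₂`
collide with a neighbour other than each other. `W` is large enough for both choices. -/

open SimpleGraph

section

variable {V : Type*} [Fintype V] {G : SimpleGraph V}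

lemma vSum_congr {w w' : Sym2 V → ℕ} {x : V} (h : ∀ y, G.Adj x y → w s(x, y) = w' s(x, y)) :
    vSum G w x = vSum G w' x :=
  sum_congr rfl fun y hy => h y (mem_filter.1 hy).2

lemma vSum_eq_vSum_deleteEdges_add {e : Sym2 V} (he : e ∈ G.edgeSet) (w : Sym2 V → ℕ) (x : V) :
    vSum G w x = vSum (G.deleteEdges {e}) w x + if x ∈ e then w e else 0 := by
  unfold vSum
  rw [← sum_filter_add_sum_filter_not _ (fun y => s(x, y) = e), add_comm, filter_filter,
    filter_filter]
  congr 1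
  · simp only [deleteEdges_adj, Set.mem_singleton_iff]
  split_ifs with hx
  · obtain ⟨y, rfl⟩ : ∃ y, s(x, y) = e := ⟨_, Sym2.other_spec hx⟩
    have : univ.filter (fun z => G.Adj x z ∧ s(x, z) = s(x, y)) = {y} := by
      ext z
      simp only [mem_filter, mem_univ, true_and, mem_singleton, Sym2.congr_right]
      exact ⟨And.right, fun h => ⟨h ▸ he, h⟩⟩
    rw [this, sum_singleton]
  · exact sum_eq_zero fun y hy => absurd ((mem_filter.1 hy).2.2 ▸ Sym2.mem_mk_left x y) hx

lemma vSum_ite_eq_vSum_deleteEdges_add {e₁ e₂ : Sym2 V} (he₁ : e₁ ∈ G.edgeSet)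
    (he₂ : e₂ ∈ G.edgeSet) (hne : e₁ ≠ e₂) (w : Sym2 V → ℕ) (α β : ℕ) (x : V) :
    vSum G (fun e => if e = e₁ then α else if e = e₂ then β else w e) x =
      vSum (G.deleteEdges {e₁, e₂}) w x + (if x ∈ e₁ then α else 0) +
        (if x ∈ e₂ then β else 0) := by
  have he₂' : e₂ ∈ (G.deleteEdges {e₁}).edgeSet := by simp [he₂, hne.symm]
  rw [vSum_eq_vSum_deleteEdges_add he₁, vSum_eq_vSum_deleteEdges_add he₂',
    deleteEdges_deleteEdges, Set.singleton_union, if_pos rfl, if_neg hne.symm, if_pos rfl,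
    add_right_comm]
  congr 2
  refine vSum_congr fun y hy => ?_
  simp only [deleteEdges_adj, Set.mem_insert_iff, Set.mem_singleton_iff, not_or] at hy
  rw [if_neg hy.2.1, if_neg hy.2.2]

/-- Contains every weight that, put on a new edge `xy`, gives `x` the same sum as one of its other
neighbours (truncated subtraction may add the harmless value `0`). -/
noncomputable def forbiddenWeights (G : SimpleGraph V) (f : V → ℕ) (x y : V) : Finset ℕ :=
  ((univ.filter (G.Adj x)).erase y).image fun z => f z - f x

lemma card_forbiddenWeights_lt {f : V → ℕ} {x y : V} (hxy : G.Adj x y) :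
    #(forbiddenWeights G f x y) < degG G x :=
  card_image_le.trans_lt (card_erase_lt_of_mem (mem_filter.2 ⟨mem_univ _, hxy⟩))

lemma add_ne_of_notMem_forbiddenWeights {f : V → ℕ} {x y z : V} {c : ℕ}
    (hc : c ∉ forbiddenWeights G f x y) (hxz : G.Adj x z) (hzy : z ≠ y) : f x + c ≠ f z :=
  fun h => hc (mem_image.2 ⟨z, mem_erase.2 ⟨hzy, mem_filter.2 ⟨mem_univ _, hxz⟩⟩, by omega⟩)

lemma add_ite_mem_ne_of_adj {f : V → ℕ} {x y : V} {c : ℕ} (hf : f x ≠ f y)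
    (hc : c ∉ forbiddenWeights G f x y ∪ forbiddenWeights G f y x)
    (hrest : ∀ p q, G.Adj p q → p ∉ s(x, y) → q ∉ s(x, y) → f p ≠ f q) {p q : V}
    (hpq : G.Adj p q) :
    f p + (if p ∈ s(x, y) then c else 0) ≠ f q + (if q ∈ s(x, y) then c else 0) := by
  rw [mem_union, not_or] at hc
  have hend : ∀ z ∈ s(x, y), ∀ t ∉ s(x, y), G.Adj z t → f z + c ≠ f t := by
    intro z hz t ht hzt
    rw [Sym2.mem_iff, not_or] at ht
    rcases Sym2.mem_iff.1 hz with rfl | rfl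
    exacts [add_ne_of_notMem_forbiddenWeights hc.1 hzt ht.2,
      add_ne_of_notMem_forbiddenWeights hc.2 hzt ht.1]
  split_ifs with hp hq hq
  · rcases Sym2.mem_iff.1 hp with rfl | rfl <;> rcases Sym2.mem_iff.1 hq with rfl | rfl
    exacts [(hpq.ne rfl).elim, by omega, by omega, (hpq.ne rfl).elim]
  · exact hend p hp q hq hpq
  · exact (hend q hq p hp hpq.symm).symm
  · simpa using hrest p q hpq hp hq

lemma add_ite_mem_ne_of_adj_of_ne {f : V → ℕ} {x y : V} {c : ℕ}
    (hc : c ∉ forbiddenWeights G f y x) (hf : ∀ p q, G.Adj p q → p ≠ x → q ≠ x → f p ≠ f q)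
    {p q : V} (hpq : G.Adj p q) (hp : p ≠ x) (hq : q ≠ x) :
    f p + (if p ∈ s(x, y) then c else 0) ≠ f q + (if q ∈ s(x, y) then c else 0) := by
  simp only [Sym2.mem_iff, hp, hq, false_or]
  split_ifs with hpy hqy hqy
  · exact absurd (hpy.trans hqy.symm) hpq.ne
  · exact hpy ▸ add_ne_of_notMem_forbiddenWeights hc (hpy ▸ hpq) hq
  · exact (hqy ▸ add_ne_of_notMem_forbiddenWeights hc (hqy ▸ hpq.symm) hp).symm
  · simpa using hf p q hpq hp hq

lemma card_insert_union_forbiddenWeights_lt {f : V → ℕ} {x y : V} (hxy : G.Adj x y) (a : ℕ) :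
    #(insert a (forbiddenWeights G f x y ∪ forbiddenWeights G f y x)) < degG G x + degG G y := by
  have := card_forbiddenWeights_lt (f := f) hxy
  have := card_forbiddenWeights_lt (f := f) hxy.symm
  have := card_insert_le a (forbiddenWeights G f x y ∪ forbiddenWeights G f y x)
  have := card_union_le (forbiddenWeights G f x y) (forbiddenWeights G f y x)
  omega

end

theorem stmt_4_general {V : Type*} [Fintype V] (G : SimpleGraph V) (v u₁ u₂ : V) (hne : u₁ ≠ u₂)
    (h₁ : G.Adj v u₁) (h₂ : G.Adj v u₂)
    (w : Sym2 V → ℕ)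
    (hnsd : NSD (G.deleteEdges {s(v, u₁), s(v, u₂)}) w)
    (W : Finset ℕ)
    (hWcard : (degG G u₁ + 1) + max 0 (degG G v + degG G u₂ - degG G u₁ - 1) ≤ W.card) :
    ∃ α ∈ W, ∃ β ∈ W, α ≠ β ∧
      NSD G (fun e => if e = s(v, u₁) then α else if e = s(v, u₂) then β else w e) := by
  set σ := vSum (G.deleteEdges {s(v, u₁), s(v, u₂)}) w
  have hσ : ∀ p q, G.Adj p q → p ≠ v → q ≠ v → σ p ≠ σ q := fun p q hpq hp hq =>
    hnsd p q (by simp [hpq, hp, hq])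
  obtain ⟨α, hαW, hα⟩ := exists_mem_notMem_of_card_lt_card
    (s := insert (σ u₂ - σ v) (forbiddenWeights G σ u₁ v)) (t := W) (by
      have := (card_insert_le (σ u₂ - σ v) _).trans (card_forbiddenWeights_lt (f := σ) h₁.symm)
      omega)
  rw [mem_insert, not_or] at hα
  set τ := fun z => σ z + if z ∈ s(v, u₁) then α else 0
  obtain ⟨β, hβW, hβ⟩ := exists_mem_notMem_of_card_lt_card
    (s := insert α (forbiddenWeights G τ v u₂ ∪ forbiddenWeights G τ u₂ v)) (t := W) (by
      have := card_insert_union_forbiddenWeights_lt (f := τ) h₂ α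
      omega)
  rw [mem_insert, not_or] at hβ
  refine ⟨α, hαW, β, hβW, Ne.symm hβ.1, fun p q hpq => ?_⟩
  have he : s(v, u₁) ≠ s(v, u₂) := fun h => hne (Sym2.congr_right.1 h)
  rw [vSum_ite_eq_vSum_deleteEdges_add h₁ h₂ he, vSum_ite_eq_vSum_deleteEdges_add h₁ h₂ he]
  refine add_ite_mem_ne_of_adj ?_ hβ.2 (fun p q hpq hp hq => ?_) hpq
  · have hu₂ : u₂ ∉ s(v, u₁) := by simp [h₂.ne.symm, hne.symm]
    simp only [τ, Sym2.mem_mk_left, if_true, if_neg hu₂]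
    omega
  · exact add_ite_mem_ne_of_adj_of_ne hα.2 hσ hpq (fun h => hp (h ▸ Sym2.mem_mk_left _ _))
      (fun h => hq (h ▸ Sym2.mem_mk_left _ _))

theorem stmt_4 {V : Type*} [Fintype V] (G : SimpleGraph V) (v u₁ u₂ : V) (hne : u₁ ≠ u₂)
    (h₁ : G.Adj v u₁) (h₂ : G.Adj v u₂) (hdeg : degG G u₂ ≤ degG G u₁)
    (w : Sym2 V → ℕ)
    (hpos : ∀ e ∈ (G.deleteEdges {s(v, u₁), s(v, u₂)}).edgeSet, 0 < w e)
    (hnsd : NSD (G.deleteEdges {s(v, u₁), s(v, u₂)}) w)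
    (W : Finset ℕ) (hWpos : ∀ x ∈ W, 0 < x)
    (hWcard : (degG G u₁ + 1) + max 0 (degG G v + degG G u₂ - degG G u₁ - 1) ≤ W.card) :
    ∃ α ∈ W, ∃ β ∈ W, α ≠ β ∧
      NSD G (fun e => if e = s(v, u₁) then α else if e = s(v, u₂) then β else w e) :=
  stmt_4_general G v u₁ u₂ hne h₁ h₂ w hnsd W hWcard
end

section
/- Let G be a nice finite simple graph with maximum degree at most 2 and with m := |E(G)| edges. Then there exists a bijection w from the edge set of G onto {1, 2, ..., m} that is a neighbour-sum-distinguishing edge-weighting of G. In particular, χ^{e,1}_Σ(G) = |E(G)|. -/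
open scoped Classical
open Finset

/-- `χ^{e,1}_Σ(G)`: the smallest `k` such that `G` admits an edge-injective
neighbour-sum-distinguishing edge-weighting with weights from `{1, ..., k}`. -/
noncomputable def chiE1 {V : Type*} [Fintype V] (G : SimpleGraph V) : ℕ :=
  sInf {k | ∃ w : Sym2 V → ℕ, (∀ e ∈ G.edgeSet, w e ∈ Finset.Icc 1 k) ∧
    EdgeInjective G w ∧ NSD G w}

/-!
For an edge `uv` of a graph of maximum degree at most 2, `σ_w(u)` is `w(uv)` plus the weight of
at most one further edge at `u`, and likewise at `v`. If both further edges exist they are distinct,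
so an injective weighting separates the sums; if exactly one exists, positivity does; and if neither
exists, `uv` is a `K₂` component. Hence every bijection onto `{1, …, m}` works, and no smaller range
can carry `m` distinct weights.
-/

theorem Set.Finite.exists_bijOn_Icc_one_ncard {α : Type*} {s : Set α} (hs : s.Finite) :
    ∃ f : α → ℕ, Set.BijOn f s ↑(Finset.Icc 1 s.ncard) :=
  hs.exists_bijOn_of_encard_eq <| by
    rw [Set.encard_coe_eq_coe_finsetCard, Nat.card_Icc, Nat.add_sub_cancel, hs.cast_ncard_eq]

theorem ncard_edgeSet_le_of_edgeInjective {V : Type*} (G : SimpleGraph V) {w : Sym2 V → ℕ} {k : ℕ}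
    (hw : ∀ e ∈ G.edgeSet, w e ∈ Icc 1 k) (hinj : EdgeInjective G w) :
    G.edgeSet.ncard ≤ k := by
  simpa using Set.ncard_le_ncard_of_injOn w (t := ↑(Icc 1 k)) (fun e he => by simpa using hw e he)
    (fun e he f hf => hinj e he f hf)

section

variable {V : Type*} [Fintype V] (G : SimpleGraph V)

theorem vSum_eq_add_sum_erase {u v : V} (huv : G.Adj u v) (w : Sym2 V → ℕ) :
    vSum G w u = w s(u, v) + ∑ x ∈ (univ.filter (G.Adj u ·)).erase v, w s(u, x) := by
  rw [vSum, ← add_sum_erase _ _ (by simpa using huv)]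

theorem vSum_of_degG_le_two {u v : V} (hu : degG G u ≤ 2) (huv : G.Adj u v) (w : Sym2 V → ℕ) :
    (degG G u = 1 ∧ vSum G w u = w s(u, v)) ∨
      ∃ x, G.Adj u x ∧ x ≠ v ∧ vSum G w u = w s(u, v) + w s(u, x) := by
  set S := univ.filter (G.Adj u ·) with hS
  have hv : v ∈ S := by simpa [hS] using huv
  have hdeg : degG G u = S.card := rfl
  have hcard : (S.erase v).card = S.card - 1 := card_erase_of_mem hv
  rw [vSum_eq_add_sum_erase G huv]
  rcases Nat.le_one_iff_eq_zero_or_eq_one.1 (show (S.erase v).card ≤ 1 by omega) with h | h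
  · have : 0 < S.card := card_pos.2 ⟨v, hv⟩
    left
    rw [card_eq_zero.1 h, sum_empty]
    omega
  · obtain ⟨x, hx⟩ := card_eq_one.1 h
    have hxS : x ∈ S.erase v := hx ▸ mem_singleton_self x
    simp only [hS, mem_erase, mem_filter, mem_univ, true_and] at hxS
    exact Or.inr ⟨x, hxS.2, hxS.1, by rw [hx, sum_singleton]⟩

theorem nsd_of_injOn (hnice : Nice G) (hΔ : ∀ v, degG G v ≤ 2) (w : Sym2 V → ℕ)
    (hpos : ∀ e ∈ G.edgeSet, 0 < w e) (hinj : Set.InjOn w G.edgeSet) : NSD G w := by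
  intro u v huv
  rcases vSum_of_degG_le_two G (hΔ u) huv w with ⟨hu1, hu⟩ | ⟨x, hux, hxv, hu⟩ <;>
    rcases vSum_of_degG_le_two G (hΔ v) huv.symm w with ⟨hv1, hv⟩ | ⟨y, hvy, -, hv⟩ <;>
    rw [hu, hv, Sym2.eq_swap (a := v)]
  · exact (hnice u v huv ⟨hu1, hv1⟩).elim
  · have := hpos _ (G.mem_edgeSet.2 hvy)
    omega
  · have := hpos _ (G.mem_edgeSet.2 hux)
    omega
  · have hne : s(u, x) ≠ s(v, y) := by
      intro h
      rcases Sym2.eq_iff.1 h with ⟨huv', -⟩ | ⟨-, hxv'⟩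
      exacts [huv.ne huv', hxv hxv']
    have := hinj.ne (G.mem_edgeSet.2 hux) (G.mem_edgeSet.2 hvy) hne
    omega

end

theorem stmt_7 {V : Type*} [Fintype V] (G : SimpleGraph V) (hnice : Nice G)
    (hΔ : ∀ v, degG G v ≤ 2) :
    (∃ w : Sym2 V → ℕ,
        Set.BijOn w G.edgeSet ↑(Finset.Icc 1 G.edgeSet.ncard) ∧ NSD G w)
      ∧ chiE1 G = G.edgeSet.ncard := by
  obtain ⟨w, hw⟩ := (Set.toFinite G.edgeSet).exists_bijOn_Icc_one_ncard
  have hpos : ∀ e ∈ G.edgeSet, 0 < w e := fun e he => (mem_Icc.1 (mem_coe.1 (hw.mapsTo he))).1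
  have hnsd : NSD G w := nsd_of_injOn G hnice hΔ w hpos hw.injOn
  refine ⟨⟨w, hw, hnsd⟩, IsLeast.csInf_eq ⟨⟨w, fun e he => hw.mapsTo he,
    fun e he f hf => hw.injOn he hf, hnsd⟩, ?_⟩⟩
  rintro k ⟨w', hw', hinj', -⟩
  exact ncard_edgeSet_le_of_edgeInjective G hw' hinj'
end
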